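/- arXiv:0805.4138 — 5 statements merged into one kernel-verified Lean document; each statement's English description precedes it below -/
import Mathlib

section
/- Let F be a field of characteristic not 2, let Q = (a,b)_F be a quaternion algebra with norm form n_Q, and let q be a quadratic form over F. If the quadratic form n_Q ⊗ q is isotropic, then the hermitian form over Q with diagonalization given by the entries of q (with respect to the canonical involution) is isotropic; conversely, if n_Q ⊗ q is anisotropic then the corresponding diagonal hermitian form ⟨a₁,…,aₙ⟩_Q is anisotropic. -/
/-!
Since `d` is central and `x̄ x = n_Q(x)` lies in `F`, each term `x̄ᵢ dᵢ xᵢ` equals `dᵢ n_Q(xᵢ)`.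
So the hermitian form at `x` is the scalar `(n_Q ⊗ q)(v)`, where `v ∈ F^{4n}` lists the coordinates
of `x`, and `x ↦ v` is a linear isomorphism `Qⁿ ≃ F^{4n}`.
-/

open scoped Quaternion

namespace QuaternionAlgebra

variable {R : Type*} [CommRing R]

def normForm (a b : R) (v : Fin 4 → R) : R :=
  v 0 ^ 2 - a * v 1 ^ 2 - b * v 2 ^ 2 + a * b * v 3 ^ 2

theorem star_mul_self_eq_algebraMap_normForm (a b : R) (x : ℍ[R,a,b]) :
    star x * x = algebraMap R ℍ[R,a,b] (normForm a b (equivTuple a 0 b x)) := by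
  ext <;> simp [normForm, Algebra.algebraMap_eq_smul_one] <;> ring

theorem star_mul_algebraMap_mul (a b d : R) (x : ℍ[R,a,b]) :
    star x * algebraMap R ℍ[R,a,b] d * x =
      algebraMap R ℍ[R,a,b] (d * normForm a b (equivTuple a 0 b x)) := by
  rw [← Algebra.commutes, mul_assoc, star_mul_self_eq_algebraMap_normForm, ← map_mul]

theorem sum_star_mul_algebraMap_mul {ι : Type*} (s : Finset ι) (a b : R) (d : ι → R)
    (x : ι → ℍ[R,a,b]) :
    ∑ i ∈ s, star (x i) * algebraMap R ℍ[R,a,b] (d i) * x i =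
      algebraMap R ℍ[R,a,b] (∑ i ∈ s, d i * normForm a b (equivTuple a 0 b (x i))) := by
  simp only [map_sum, star_mul_algebraMap_mul]

end QuaternionAlgebra

theorem hermitian_aniso_iff_norm_tensor_aniso_general (F : Type*) [Field F]
    (a b : F)
    (n : ℕ) (d : Fin n → F) :
    (∀ v : Fin n → Fin 4 → F,
        (∑ i, d i * (v i 0 ^ 2 - a * v i 1 ^ 2 - b * v i 2 ^ 2 + a * b * v i 3 ^ 2)) = 0 →
          v = 0)
      ↔
    (∀ x : Fin n → ℍ[F, a, b],
        (∑ i, star (x i) * algebraMap F ℍ[F, a, b] (d i) * x i) = 0 → x = 0) := by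
  let e : (Fin n → Fin 4 → F) ≃ₗ[F] (Fin n → ℍ[F,a,b]) :=
    .piCongrRight fun _ => (QuaternionAlgebra.linearEquivTuple a 0 b).symm
  refine e.toEquiv.forall_congr fun v => ?_
  rw [LinearEquiv.coe_toEquiv, QuaternionAlgebra.sum_star_mul_algebraMap_mul,
    FaithfulSMul.algebraMap_eq_zero_iff, e.map_eq_zero_iff]
  rfl

/-- Let `Q = (a,b)_F` be a quaternion algebra with norm form
`n_Q = ⟨1,-a,-b,ab⟩` and let `q = ⟨d₁,…,dₙ⟩` be a diagonal quadratic form over `F`.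
Then the quadratic form `n_Q ⊗ q` (on `F^{4n}`) is anisotropic iff the diagonal
hermitian form `⟨d₁,…,dₙ⟩_Q` (with respect to the canonical involution of `Q`)
is anisotropic. -/
theorem hermitian_aniso_iff_norm_tensor_aniso (F : Type*) [Field F] (hchar : (2 : F) ≠ 0)
    (a b : F) (ha : a ≠ 0) (hb : b ≠ 0)
    (n : ℕ) (d : Fin n → F) (hd : ∀ i, d i ≠ 0) :
    (∀ v : Fin n → Fin 4 → F,
        (∑ i, d i * (v i 0 ^ 2 - a * v i 1 ^ 2 - b * v i 2 ^ 2 + a * b * v i 3 ^ 2)) = 0 →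
          v = 0)
      ↔
    (∀ x : Fin n → ℍ[F, a, b],
        (∑ i, star (x i) * algebraMap F ℍ[F, a, b] (d i) * x i) = 0 → x = 0) :=
  hermitian_aniso_iff_norm_tensor_aniso_general F a b n d
end

section
/- Let F be a field of characteristic not 2, let a, a', b' ∈ F^×, and let μ ∈ F^× be such that (a) the 3-fold Pfister form ⟪μ, a, b'⟫ is hyperbolic, (b) the quadratic form ⟨1, -b', -aa', -μ⟩ is isotropic, and (c) the forms ⟨1,-a⟩ and ⟨1,-b',a'b'⟩ are anisotropic. Then there exist z₀, z₁, y₀, y₁, y₂ ∈ F such that μ·(z₀² - a·z₁²) = y₀² - b'·y₁² + a'b'·y₂² ≠ 0. -/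
open Module in
/-- A 2×3 matrix over a field has a nontrivial kernel. -/
lemma cvl_exists_mulVec23 {F : Type*} [Field F] (M : Matrix (Fin 2) (Fin 3) F) :
    ∃ v : Fin 3 → F, v ≠ 0 ∧ M.mulVec v = 0 := by
  have h := LinearMap.finrank_range_add_finrank_ker M.mulVecLin
  have hker : LinearMap.ker M.mulVecLin ≠ ⊥ := by
    intro hbot
    rw [hbot, finrank_bot] at h
    have hr : finrank F (LinearMap.range M.mulVecLin) ≤ 2 := by
      simpa using Submodule.finrank_le (LinearMap.range M.mulVecLin)
    rw [Module.finrank_fin_fun] at h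
    omega
  obtain ⟨v, hv, hvne⟩ := Submodule.ne_bot_iff _ |>.mp hker
  exact ⟨v, hvne, by simpa [Matrix.mulVecLin_apply] using hv⟩

/-- Two homogeneous linear equations in three unknowns have a nontrivial common solution. -/
lemma cvl_exists_sol23 {F : Type*} [Field F] (q0 q1 q2 s0 s1 s2 : F) :
    ∃ z0 z1 t : F, ¬(z0 = 0 ∧ z1 = 0 ∧ t = 0) ∧
      q0*z0 + q1*z1 + q2*t = 0 ∧ s0*z0 + s1*z1 + s2*t = 0 := by
  obtain ⟨v, hvne, hveq⟩ := cvl_exists_mulVec23 !![q0,q1,q2; s0,s1,s2]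
  refine ⟨v 0, v 1, v 2, ?_, ?_, ?_⟩
  · rintro ⟨h0, h1, h2⟩
    apply hvne
    funext i
    fin_cases i <;> assumption
  · have := congrFun hveq 0
    simpa [Matrix.mulVec, dotProduct, Fin.sum_univ_three] using this
  · have := congrFun hveq 1
    simpa [Matrix.mulVec, dotProduct, Fin.sum_univ_three] using this

/-- Scaling representation by the quaternion norm form by a square. -/
lemma cvl_scale {F : Type*} [Field F] (a b' μ d c0 c1 c2 c3 : F) (hd : d ≠ 0)
    (h : c0^2 - a*c1^2 - b'*c2^2 + a*b'*c3^2 = μ * d^2) :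
    ∃ e0 e1 e2 e3 : F, e0^2 - a*e1^2 - b'*e2^2 + a*b'*e3^2 = μ := by
  refine ⟨c0/d, c1/d, c2/d, c3/d, ?_⟩
  field_simp
  linear_combination h

/-- If the quaternion norm form `⟨1,-a,-b',ab'⟩` is isotropic (and `⟨1,-a⟩` is anisotropic),
then it represents any `μ`. -/
lemma cvl_rep_of_isotropic {F : Type*} [Field F] (hchar : (2 : F) ≠ 0)
    (a b' μ : F) (ha : a ≠ 0) (hb' : b' ≠ 0)
    (hanis1 : ∀ x y : F, x ^ 2 - a * y ^ 2 = 0 → x = 0 ∧ y = 0)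
    (r0 r1 r2 r3 : F) (hrne : ¬(r0 = 0 ∧ r1 = 0 ∧ r2 = 0 ∧ r3 = 0))
    (hr : r0^2 - a*r1^2 - b'*r2^2 + a*b'*r3^2 = 0) :
    ∃ c0 c1 c2 c3 : F, c0^2 - a*c1^2 - b'*c2^2 + a*b'*c3^2 = μ := by
  have hg : r2^2 - a*r3^2 ≠ 0 := by
    intro h0
    obtain ⟨h2, h3⟩ := hanis1 _ _ h0
    have h01 : r0^2 - a*r1^2 = 0 := by
      rw [h2, h3] at hr
      linear_combination hr
    obtain ⟨h0', h1'⟩ := hanis1 _ _ h01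
    exact hrne ⟨h0', h1', h2, h3⟩
  have hbg : b' * (r2^2 - a*r3^2)^2 = (r0*r2 + a*r1*r3)^2 - a*(r0*r3 + r1*r2)^2 := by
    linear_combination (-(r2^2 - a*r3^2)) * hr
  by_cases he : r0*r2 + a*r1*r3 = 0
  · have hf : r0*r3 + r1*r2 ≠ 0 := by
      intro h0
      have hz : b' * (r2^2 - a*r3^2)^2 = 0 := by
        rw [he, h0] at hbg
        linear_combination hbg
      exact mul_ne_zero hb' (pow_ne_zero 2 hg) hz
    refine cvl_scale a b' μ (2*(a*(r0*r3 + r1*r2)))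
      (a*(r0*r3 + r1*r2)*(μ+1)) 0 0 ((r2^2 - a*r3^2)*(μ-1)) ?_ ?_
    · exact mul_ne_zero hchar (mul_ne_zero ha hf)
    · linear_combination a*(μ-1)^2*hbg + a*(μ-1)^2*(r0*r2 + a*r1*r3)*he
  · refine cvl_scale a b' μ (2*(r0*r2 + a*r1*r3))
      ((r0*r2 + a*r1*r3)*(μ+1)) ((r0*r3 + r1*r2)*(μ-1)) ((r2^2 - a*r3^2)*(μ-1)) 0 ?_ ?_
    · exact mul_ne_zero hchar he
    · linear_combination (-(μ-1)^2)*hbg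

/-- `μ` is represented by the quaternion norm form `⟨1,-a,-b',ab'⟩`. -/
lemma cvl_repA {F : Type*} [Field F] (hchar : (2 : F) ≠ 0)
    (a b' μ : F) (ha : a ≠ 0) (hb' : b' ≠ 0) (hμ : μ ≠ 0)
    (hanis1 : ∀ x y : F, x ^ 2 - a * y ^ 2 = 0 → x = 0 ∧ y = 0)
    (p0 p1 p2 p3 q0 q1 q2 q3 : F)
    (hne : ¬(p0=0 ∧ p1=0 ∧ p2=0 ∧ p3=0 ∧ q0=0 ∧ q1=0 ∧ q2=0 ∧ q3=0))
    (heq : p0^2 - a*p1^2 - b'*p2^2 + a*b'*p3^2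
         = μ*(q0^2 - a*q1^2 - b'*q2^2 + a*b'*q3^2)) :
    ∃ c0 c1 c2 c3 : F, c0^2 - a*c1^2 - b'*c2^2 + a*b'*c3^2 = μ := by
  by_cases hNq : q0^2 - a*q1^2 - b'*q2^2 + a*b'*q3^2 = 0
  · have hNp : p0^2 - a*p1^2 - b'*p2^2 + a*b'*p3^2 = 0 := by
      rw [hNq, mul_zero] at heq; exact heq
    by_cases hp : p0 = 0 ∧ p1 = 0 ∧ p2 = 0 ∧ p3 = 0
    · have hq : ¬(q0 = 0 ∧ q1 = 0 ∧ q2 = 0 ∧ q3 = 0) := by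
        intro hq'
        exact hne ⟨hp.1, hp.2.1, hp.2.2.1, hp.2.2.2, hq'.1, hq'.2.1, hq'.2.2.1, hq'.2.2.2⟩
      exact cvl_rep_of_isotropic hchar a b' μ ha hb' hanis1 q0 q1 q2 q3 hq hNq
    · exact cvl_rep_of_isotropic hchar a b' μ ha hb' hanis1 p0 p1 p2 p3 hp hNp
  · refine cvl_scale a b' μ (q0^2 - a*q1^2 - b'*q2^2 + a*b'*q3^2)
      (p0*q0 - a*p1*q1 - b'*p2*q2 + a*b'*p3*q3)
      (p1*q0 - p0*q1 - b'*p3*q2 + b'*p2*q3)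
      (p2*q0 + a*p3*q1 - p0*q2 - a*p1*q3)
      (p3*q0 + p2*q1 - p1*q2 - p0*q3) hNq ?_
    linear_combination (q0^2 - a*q1^2 - b'*q2^2 + a*b'*q3^2) * heq

/-- Lemma on common values. Let `F` have characteristic `≠ 2` and
`a, a', b', μ ∈ F^×`. Assume (a) the 3-fold Pfister form `⟪μ, a, b'⟫` is hyperbolic,
(b) the form `⟨1, -b', -aa', -μ⟩` is isotropic, and (c) the forms `⟨1,-a⟩` and
`⟨1,-b',a'b'⟩` are anisotropic. Then there exist `z₀ z₁ y₀ y₁ y₂` with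
`μ(z₀² - a z₁²) = y₀² - b' y₁² + a'b' y₂² ≠ 0`. -/
theorem common_value_lemma (F : Type*) [Field F] (hchar : (2 : F) ≠ 0)
    (a a' b' μ : F) (ha : a ≠ 0) (ha' : a' ≠ 0) (hb' : b' ≠ 0) (hμ : μ ≠ 0)
    -- (a) the 3-fold Pfister form ⟪μ, a, b'⟫ = ⟨1,-μ,-a,μa,-b',μb',ab',-μab'⟩ is hyperbolic
    (hhyp : QuadraticMap.Equivalent
      (QuadraticMap.weightedSumSquares F
        ![1, -μ, -a, μ * a, -b', μ * b', a * b', -(μ * a * b')])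
      (QuadraticMap.weightedSumSquares F ![1, -1, 1, -1, 1, -1, 1, -1]))
    -- (b) ⟨1, -b', -aa', -μ⟩ is isotropic
    (hiso : ∃ v : Fin 4 → F, v ≠ 0 ∧
      v 0 ^ 2 - b' * v 1 ^ 2 - a * a' * v 2 ^ 2 - μ * v 3 ^ 2 = 0)
    -- (c) ⟨1,-a⟩ and ⟨1,-b',a'b'⟩ are anisotropic
    (hanis1 : ∀ x y : F, x ^ 2 - a * y ^ 2 = 0 → x = 0 ∧ y = 0)
    (hanis2 : ∀ x y z : F, x ^ 2 - b' * y ^ 2 + a' * b' * z ^ 2 = 0 → x = 0 ∧ y = 0 ∧ z = 0) :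
    ∃ z₀ z₁ y₀ y₁ y₂ : F,
      μ * (z₀ ^ 2 - a * z₁ ^ 2) = y₀ ^ 2 - b' * y₁ ^ 2 + a' * b' * y₂ ^ 2 ∧
      y₀ ^ 2 - b' * y₁ ^ 2 + a' * b' * y₂ ^ 2 ≠ 0 := by
  -- Step 1: extract a nonzero isotropic vector of the 8-dimensional Pfister form
  obtain ⟨φ⟩ := hhyp
  have hh : (QuadraticMap.weightedSumSquares F ![1, -1, 1, -1, 1, -1, 1, -1])
      ![1, 1, 0, 0, 0, 0, 0, 0] = 0 := by
    rw [QuadraticMap.weightedSumSquares_apply, Fin.sum_univ_eight]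
    simp only [show (![1, 1, 0, 0, 0, 0, 0, 0] : Fin 8 → F) 0 = 1 from rfl,
      show (![1, 1, 0, 0, 0, 0, 0, 0] : Fin 8 → F) 1 = 1 from rfl,
      show (![1, 1, 0, 0, 0, 0, 0, 0] : Fin 8 → F) 2 = 0 from rfl,
      show (![1, 1, 0, 0, 0, 0, 0, 0] : Fin 8 → F) 3 = 0 from rfl,
      show (![1, 1, 0, 0, 0, 0, 0, 0] : Fin 8 → F) 4 = 0 from rfl,
      show (![1, 1, 0, 0, 0, 0, 0, 0] : Fin 8 → F) 5 = 0 from rfl,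
      show (![1, 1, 0, 0, 0, 0, 0, 0] : Fin 8 → F) 6 = 0 from rfl,
      show (![1, 1, 0, 0, 0, 0, 0, 0] : Fin 8 → F) 7 = 0 from rfl,
      show (![1, -1, 1, -1, 1, -1, 1, -1] : Fin 8 → ℤ) 0 = 1 from rfl,
      show (![1, -1, 1, -1, 1, -1, 1, -1] : Fin 8 → ℤ) 1 = -1 from rfl,
      show (![1, -1, 1, -1, 1, -1, 1, -1] : Fin 8 → ℤ) 2 = 1 from rfl,
      show (![1, -1, 1, -1, 1, -1, 1, -1] : Fin 8 → ℤ) 3 = -1 from rfl,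
      show (![1, -1, 1, -1, 1, -1, 1, -1] : Fin 8 → ℤ) 4 = 1 from rfl,
      show (![1, -1, 1, -1, 1, -1, 1, -1] : Fin 8 → ℤ) 5 = -1 from rfl,
      show (![1, -1, 1, -1, 1, -1, 1, -1] : Fin 8 → ℤ) 6 = 1 from rfl,
      show (![1, -1, 1, -1, 1, -1, 1, -1] : Fin 8 → ℤ) 7 = -1 from rfl]
    norm_num
  have hne : (![1, 1, 0, 0, 0, 0, 0, 0] : Fin 8 → F) ≠ 0 := by
    intro h0
    have := congrFun h0 0
    simp at this
  set w : Fin 8 → F := φ.symm ![1, 1, 0, 0, 0, 0, 0, 0] with hwdef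
  have hwne : w ≠ 0 := by
    intro h0
    apply hne
    have h1 : φ (φ.symm ![1, 1, 0, 0, 0, 0, 0, 0]) = ![1, 1, 0, 0, 0, 0, 0, 0] :=
      φ.toLinearEquiv.apply_symm_apply _
    rw [hwdef] at h0
    rw [← h1, h0]
    simpa using (map_zero φ.toLinearEquiv)
  have hkey : w 0^2 - μ*w 1^2 - a*w 2^2 + μ*a*w 3^2 - b'*w 4^2 + μ*b'*w 5^2
      + a*b'*w 6^2 - μ*a*b'*w 7^2 = 0 := by
    have hval := φ.symm.map_app ![1, 1, 0, 0, 0, 0, 0, 0]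
    rw [hh, QuadraticMap.weightedSumSquares_apply, Fin.sum_univ_eight] at hval
    simp only [smul_eq_mul,
      show (![1, -μ, -a, μ*a, -b', μ*b', a*b', -(μ*a*b')] : Fin 8 → F) 0 = 1 from rfl,
      show (![1, -μ, -a, μ*a, -b', μ*b', a*b', -(μ*a*b')] : Fin 8 → F) 1 = -μ from rfl,
      show (![1, -μ, -a, μ*a, -b', μ*b', a*b', -(μ*a*b')] : Fin 8 → F) 2 = -a from rfl,
      show (![1, -μ, -a, μ*a, -b', μ*b', a*b', -(μ*a*b')] : Fin 8 → F) 3 = μ*a from rfl,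
      show (![1, -μ, -a, μ*a, -b', μ*b', a*b', -(μ*a*b')] : Fin 8 → F) 4 = -b' from rfl,
      show (![1, -μ, -a, μ*a, -b', μ*b', a*b', -(μ*a*b')] : Fin 8 → F) 5 = μ*b' from rfl,
      show (![1, -μ, -a, μ*a, -b', μ*b', a*b', -(μ*a*b')] : Fin 8 → F) 6 = a*b' from rfl,
      show (![1, -μ, -a, μ*a, -b', μ*b', a*b', -(μ*a*b')] : Fin 8 → F) 7 = -(μ*a*b') from rfl]
      at hval
    linear_combination hval
  -- Step 2: μ is represented by the quaternion norm form ⟨1,-a,-b',ab'⟩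
  obtain ⟨c0, c1, c2, c3, hc⟩ : ∃ c0 c1 c2 c3 : F,
      c0^2 - a*c1^2 - b'*c2^2 + a*b'*c3^2 = μ := by
    apply cvl_repA hchar a b' μ ha hb' hμ hanis1 (w 0) (w 2) (w 4) (w 6) (w 1) (w 3) (w 5) (w 7)
    · rintro ⟨h0, h2, h4, h6, h1, h3, h5, h7⟩
      apply hwne
      funext i
      fin_cases i <;> assumption
    · linear_combination hkey
  -- Step 3: case analysis on the isotropic vector of ⟨1,-b',-aa',-μ⟩
  obtain ⟨v, hvne, hveq⟩ := hiso
  by_cases h3 : v 3 = 0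
  · by_cases h2 : v 2 = 0
    · exfalso
      have h01 : v 0 ^ 2 - b' * v 1 ^ 2 + a' * b' * (0:F) ^ 2 = 0 := by
        rw [h3, h2] at hveq
        linear_combination hveq
      obtain ⟨h0', h1', -⟩ := hanis2 _ _ _ h01
      apply hvne
      funext i
      fin_cases i <;> assumption
    · -- Case A : v 3 = 0, v 2 ≠ 0
      have hv12 : v 0 ^ 2 - b' * v 1 ^ 2 = a * a' * v 2 ^ 2 := by
        rw [h3] at hveq
        linear_combination hveq
      obtain ⟨z0, z1, t, hzne, hE1, hE3⟩ :=
        cvl_exists_sol23 c1 c0 (b' * v 1) c3 (-c2) (-(v 0))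
      refine ⟨z0, z1, c0*z0 + a*c1*z1, c2*z0 - a*c3*z1, a*t*(v 2), ?_, ?_⟩
      · linear_combination (-(z0^2 - a*z1^2))*hc - a*(c1*z0 + c0*z1 - b'*(v 1)*t)*hE1
          + a*b'*(c3*z0 - c2*z1 + (v 0)*t)*hE3 + a*b'*t^2*hv12
      · intro hzero
        obtain ⟨hy0, hy1, hy2⟩ := hanis2 _ _ _ hzero
        have ht : t = 0 := by
          rcases mul_eq_zero.mp hy2 with h | h
          · rcases mul_eq_zero.mp h with h' | h'
            · exact absurd h' ha
            · exact h'
          · exact absurd h h2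
        have heq1 : μ * (z0 ^ 2 - a * z1 ^ 2) = 0 := by
          rw [show μ * (z0 ^ 2 - a * z1 ^ 2)
            = (c0*z0 + a*c1*z1)^2 - b'*(c2*z0 - a*c3*z1)^2 + a'*b'*(a*t*(v 2))^2 from by
              linear_combination (-(z0^2 - a*z1^2))*hc - a*(c1*z0 + c0*z1 - b'*(v 1)*t)*hE1
                + a*b'*(c3*z0 - c2*z1 + (v 0)*t)*hE3 + a*b'*t^2*hv12]
          exact hzero
        have hz : z0 ^ 2 - a * z1 ^ 2 = 0 := by
          rcases mul_eq_zero.mp heq1 with h | h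
          · exact absurd h hμ
          · exact h
        obtain ⟨hz0, hz1⟩ := hanis1 _ _ hz
        exact hzne ⟨hz0, hz1, ht⟩
  · -- v 3 ≠ 0
    set x : F := v 0 / v 3 with hxdef
    set y : F := v 1 / v 3 with hydef
    set u : F := v 2 / v 3 with hudef
    have hx : x^2 - b'*y^2 - a*a'*u^2 = μ := by
      rw [hxdef, hydef, hudef]
      field_simp
      linear_combination hveq
    by_cases hu : u = 0
    · refine ⟨1, 0, x, y, 0, ?_, ?_⟩
      · linear_combination (-1 : F)*hx - a*a'*u*hu
      · intro h0
        apply hμ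
        linear_combination -hx + h0 - a*a'*u*hu
    · -- Case B : v 3 ≠ 0, u ≠ 0
      obtain ⟨z0, z1, t, hzne, hE1, hE3⟩ :=
        cvl_exists_sol23 c1 c0 (b'*y - b'*c2) c3 (-c2) (c0 - x)
      refine ⟨z0, z1, c0*z0 + a*c1*z1 - a*b'*c3*t, c2*z0 - a*c3*z1 + a*c1*t, a*t*u, ?_, ?_⟩
      · linear_combination (-(z0^2 - a*z1^2 + a*b'*t^2))*hc
          - a*(c1*z0 + c0*z1 - b'*c2*t - b'*y*t)*hE1
          + a*b'*(c3*z0 - c2*z1 + c0*t + x*t)*hE3 + a*b'*t^2*hx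
      · intro hzero
        obtain ⟨hy0, hy1, hy2⟩ := hanis2 _ _ _ hzero
        have ht : t = 0 := by
          rcases mul_eq_zero.mp hy2 with h | h
          · rcases mul_eq_zero.mp h with h' | h'
            · exact absurd h' ha
            · exact h'
          · exact absurd h hu
        have heq1 : μ * (z0 ^ 2 - a * z1 ^ 2) = 0 := by
          rw [show μ * (z0 ^ 2 - a * z1 ^ 2)
            = (c0*z0 + a*c1*z1 - a*b'*c3*t)^2 - b'*(c2*z0 - a*c3*z1 + a*c1*t)^2
              + a'*b'*(a*t*u)^2 from by
              linear_combination (-(z0^2 - a*z1^2 + a*b'*t^2))*hc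
                - a*(c1*z0 + c0*z1 - b'*c2*t - b'*y*t)*hE1
                + a*b'*(c3*z0 - c2*z1 + c0*t + x*t)*hE3 + a*b'*t^2*hx]
          exact hzero
        have hz : z0 ^ 2 - a * z1 ^ 2 = 0 := by
          rcases mul_eq_zero.mp heq1 with h | h
          · exact absurd h hμ
          · exact h
        obtain ⟨hz0, hz1⟩ := hanis1 _ _ hz
        exact hzne ⟨hz0, hz1, ht⟩
end

section
/- Let F be a field of characteristic not 2 and let Q = (a,b)_F be a quaternion division algebra. Let F_Q = F(t)(√(at²+b)) be the function field of the associated conic. Then F is quadratically closed in F_Q: every element of F that is a square in F_Q is already a square in F. -/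
open scoped Quaternion

open Polynomial

-- square-zero nonzero element is not a unit
lemma aux_not_unit {R : Type*} [Ring R] {x : R} (hx : x * x = 0) (h0 : x ≠ 0) : ¬ IsUnit x := by
  rintro ⟨u, rfl⟩
  apply h0
  calc (u : R) = (u * u) * (u⁻¹ : Units R) := by
        rw [mul_assoc]
        simp
    _ = 0 := by rw [hx]; simp

lemma aux_prime_pi {F : Type*} [Field F] {a b : F} (ha : a ≠ 0)
    (hroot : ∀ r : F, a * r ^ 2 + b ≠ 0) :
    Prime (Polynomial.C a * Polynomial.X ^ 2 + Polynomial.C b : F[X]) := by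
  have h2 : (Polynomial.C a * Polynomial.X ^ 2 + Polynomial.C b : F[X])
      = Polynomial.C a * Polynomial.X ^ 2 + Polynomial.C 0 * Polynomial.X + Polynomial.C b := by
    simp
  have hdeg : (Polynomial.C a * Polynomial.X ^ 2 + Polynomial.C b : F[X]).natDegree = 2 := by
    rw [h2]; exact Polynomial.natDegree_quadratic ha
  have hne : (Polynomial.C a * Polynomial.X ^ 2 + Polynomial.C b : F[X]) ≠ 0 := by
    intro h; rw [h] at hdeg; simp at hdeg
  have : Irreducible (Polynomial.C a * Polynomial.X ^ 2 + Polynomial.C b : F[X]) := by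
    rw [Polynomial.irreducible_iff_roots_eq_zero_of_degree_le_three (by omega) (by omega)]
    rw [Multiset.eq_zero_iff_forall_notMem]
    intro r hr
    rw [Polynomial.mem_roots hne] at hr
    simp [Polynomial.IsRoot] at hr
    exact hroot r (by linear_combination hr)
  exact this.prime

/-- If `π` is prime and `u ≠ 0`, then `π` is not `C u` times a square in `RatFunc F`. -/
lemma aux_not_sq {F : Type*} [Field F] {π : F[X]} (hπ : Prime π) {u : F} (hu : u ≠ 0)
    (r : RatFunc F) : algebraMap F[X] (RatFunc F) π ≠ RatFunc.C u * r ^ 2 := by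
  intro h
  have hr0 : r ≠ 0 := by
    rintro rfl
    rw [zero_pow (by norm_num), mul_zero] at h
    exact hπ.ne_zero (RatFunc.algebraMap_injective F (by simpa using h))
  have hden : (algebraMap F[X] (RatFunc F)) r.denom ≠ 0 :=
    RatFunc.algebraMap_ne_zero r.denom_ne_zero
  have hnd : r = algebraMap F[X] (RatFunc F) r.num / algebraMap F[X] (RatFunc F) r.denom :=
    (r.num_div_denom).symm
  rw [hnd] at h
  rw [div_pow, mul_div_assoc', eq_div_iff (pow_ne_zero 2 hden)] at h
  have key : π * r.denom ^ 2 = Polynomial.C u * r.num ^ 2 := by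
    apply RatFunc.algebraMap_injective F
    rw [map_mul, map_mul, map_pow, map_pow, RatFunc.algebraMap_C, h]
  have hdvd_num : π ∣ r.num := by
    apply hπ.dvd_of_dvd_pow (n := 2)
    have : π ∣ Polynomial.C u * r.num ^ 2 := ⟨r.denom ^ 2, key.symm⟩
    exact (IsUnit.dvd_mul_left (Polynomial.isUnit_C.mpr hu.isUnit)).mp this
  have hdvd_den : π ∣ r.denom := by
    apply hπ.dvd_of_dvd_pow (n := 2)
    obtain ⟨n, hn⟩ := hdvd_num
    have h0 : π ≠ 0 := hπ.ne_zero
    have : π * r.denom ^ 2 = π * (Polynomial.C u * π * n ^ 2) := by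
      rw [key, hn]; ring
    have := mul_left_cancel₀ h0 this
    exact ⟨Polynomial.C u * n ^ 2, by rw [this]; ring⟩
  exact hπ.not_unit ((RatFunc.isCoprime_num_denom r).isUnit_of_dvd' hdvd_num hdvd_den)

/-- A constant that is a square in `RatFunc F` is a square in `F`. -/
lemma aux_const_sq {F : Type*} [Field F] {lam : F} {p : RatFunc F}
    (h : RatFunc.C lam = p ^ 2) : ∃ m : F, lam = m ^ 2 := by
  have key : Polynomial.C lam * p.denom ^ 2 = p.num ^ 2 := by
    apply RatFunc.algebraMap_injective F
    have hden : (algebraMap F[X] (RatFunc F)) p.denom ≠ 0 :=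
      RatFunc.algebraMap_ne_zero p.denom_ne_zero
    have hnd : p = algebraMap F[X] (RatFunc F) p.num / algebraMap F[X] (RatFunc F) p.denom :=
      (p.num_div_denom).symm
    rw [hnd, div_pow, eq_div_iff (pow_ne_zero 2 hden)] at h
    rw [map_mul, map_pow, map_pow, RatFunc.algebraMap_C, h]
  have hlc := congrArg Polynomial.leadingCoeff key
  rw [Polynomial.leadingCoeff_mul, Polynomial.leadingCoeff_pow, Polynomial.leadingCoeff_pow,
    Polynomial.leadingCoeff_C] at hlc
  have hg : p.denom.leadingCoeff ≠ 0 :=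
    Polynomial.leadingCoeff_ne_zero.mpr p.denom_ne_zero
  refine ⟨p.num.leadingCoeff / p.denom.leadingCoeff, ?_⟩
  field_simp
  linear_combination hlc


/-- Let `Q = (a,b)_F` be a quaternion *division* algebra and let
`K = F_Q = F(t)(√(at²+b))` be the function field of the associated conic, presented as
a field containing `F(t)` (via `ι`) and an element `s` with `s² = at² + b`, every element
of `K` being of the form `p + q·s` with `p, q ∈ F(t)`. Then `F` is quadratically closed
in `F_Q`: any `λ ∈ F` that is a square in `F_Q` is a square in `F`. -/
theorem quadratically_closed_in_conic_function_field (F : Type*) [Field F]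
    (hchar : (2 : F) ≠ 0) (a b : F)
    (hdiv : ∀ x : ℍ[F, a, b], x ≠ 0 → IsUnit x)
    (K : Type*) [Field K] (ι : RatFunc F →+* K) (s : K)
    (hs : s ^ 2 = ι (RatFunc.C a * RatFunc.X ^ 2 + RatFunc.C b))
    (hgen : ∀ x : K, ∃ p q : RatFunc F, x = ι p + ι q * s)
    (lam : F) (hsq : ∃ x : K, ι (RatFunc.C lam) = x ^ 2) :
    ∃ m : F, lam = m ^ 2 := by
  by_cases hl0 : lam = 0
  · exact ⟨0, by simp [hl0]⟩
  -- a ≠ 0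
  have ha : a ≠ 0 := by
    intro ha0
    have hx0 : (⟨0, 1, 0, 0⟩ : ℍ[F, a, b]) ≠ 0 := by
      intro h
      have := congrArg QuaternionAlgebra.imI h
      simp at this
    refine aux_not_unit ?_ hx0 (hdiv _ hx0)
    ext <;> simp [ha0]
  -- no root
  have hroot : ∀ r : F, a * r ^ 2 + b ≠ 0 := by
    intro r hr
    have hx0 : (⟨0, r, 1, 0⟩ : ℍ[F, a, b]) ≠ 0 := by
      intro h
      have := congrArg QuaternionAlgebra.imJ h
      simp at this
    refine aux_not_unit ?_ hx0 (hdiv _ hx0)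
    ext <;> simp
    linear_combination hr
  set c : RatFunc F := RatFunc.C a * RatFunc.X ^ 2 + RatFunc.C b with hc
  set π : Polynomial F := Polynomial.C a * Polynomial.X ^ 2 + Polynomial.C b with hπdef
  have hπ : Prime π := aux_prime_pi ha hroot
  have hcπ : algebraMap (Polynomial F) (RatFunc F) π = c := by
    rw [hπdef, hc]
    simp [map_add, map_mul, map_pow, RatFunc.algebraMap_C, RatFunc.algebraMap_X]
  have hinj : Function.Injective ι := ι.injective
  obtain ⟨x, hx⟩ := hsq
  obtain ⟨p, q, rfl⟩ := hgen x
  have hexp : ι (RatFunc.C lam) = ι (p ^ 2 + q ^ 2 * c) + ι (2 * p * q) * s := by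
    rw [hx, add_sq, mul_pow, hs]
    simp only [map_add, map_mul, map_pow, map_ofNat]
    ring
  by_cases hB : 2 * p * q = 0
  · have hAeq : RatFunc.C lam = p ^ 2 + q ^ 2 * c := by
      apply hinj
      rw [hexp, hB, map_zero, zero_mul, add_zero]
    have h2 : (2 : RatFunc F) ≠ 0 := by
      rw [← map_ofNat (RatFunc.C : F →+* RatFunc F) 2]
      exact (_root_.map_ne_zero _).mpr hchar
    have hpq : p = 0 ∨ q = 0 := by
      rcases mul_eq_zero.mp hB with h | h
      · rcases mul_eq_zero.mp h with h' | h'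
        · exact absurd h' h2
        · exact Or.inl h'
      · exact Or.inr h
    rcases hpq with hp0 | hq0
    · -- p = 0 : C lam = q² c, contradiction
      rw [hp0] at hAeq
      norm_num at hAeq
      have hq0 : q ≠ 0 := by
        rintro rfl
        apply hl0
        have h0 : RatFunc.C lam = 0 := by rw [hAeq]; ring
        exact (_root_.map_eq_zero (RatFunc.C : F →+* RatFunc F)).mp h0
      exfalso
      refine aux_not_sq hπ hl0 q⁻¹ ?_
      rw [hcπ, hAeq, inv_pow]
      field_simp
    · rw [hq0] at hAeq
      norm_num at hAeq
      exact aux_const_sq hAeq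
  · exfalso
    have hBne : ι (2 * p * q) ≠ 0 := (_root_.map_ne_zero ι).mpr hB
    have hseq : s = ι ((RatFunc.C lam - (p ^ 2 + q ^ 2 * c)) / (2 * p * q)) := by
      rw [map_div₀, map_sub, hexp, eq_div_iff hBne]
      ring
    have hcsq : c = ((RatFunc.C lam - (p ^ 2 + q ^ 2 * c)) / (2 * p * q)) ^ 2 := by
      apply hinj
      rw [map_pow, ← hseq, ← hs]
    exact aux_not_sq hπ (one_ne_zero) _ (by rw [map_one, one_mul, hcπ, ← hcsq])
end

section
/- Let F be a field of characteristic not 2, let (A, σ) be a central simple F-algebra with anisotropic involution σ, and suppose y ∈ A[t] satisfies σ(y) = -y and y² = (at² + b)·1 for some a, b ∈ F^×. Then y has degree exactly 1 in t, i.e., y = λt + μ with λ, μ ∈ A, λ ≠ 0, and moreover σ(λ) = -λ, σ(μ) = -μ, λ² = a, μ² = b, μλ = -λμ. -/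
open Polynomial

/-- Let `(A, σ)` be a central simple `F`-algebra (char `F ≠ 2`) with an
anisotropic involution `σ` of the first kind, and suppose `y ∈ A[t]` satisfies
`σ(y) = -y` (coefficientwise) and `y² = at² + b` with `a, b ∈ F^×`. Then `y = λt + μ`
has degree exactly 1, and its coefficients satisfy `σ(λ) = -λ`, `σ(μ) = -μ`,
`λ² = a`, `μ² = b`, `μλ = -λμ`. -/
theorem skew_square_root_degree_one (F : Type*) [Field F] (hchar : (2 : F) ≠ 0)
    (A : Type*) [Ring A] [Algebra F A] [FiniteDimensional F A]
    [Algebra.IsCentral F A] [IsSimpleRing A]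
    (σ : A →ₗ[F] A) (hanti : ∀ x y : A, σ (x * y) = σ y * σ x) (hinvol : ∀ x : A, σ (σ x) = x)
    (haniso : ∀ x : A, σ x * x = 0 → x = 0)
    (a b : F) (ha : a ≠ 0) (hb : b ≠ 0)
    (y : Polynomial A)
    (hskew : ∀ n : ℕ, σ (y.coeff n) = -y.coeff n)
    (hy2 : y ^ 2 = C (algebraMap F A a) * X ^ 2 + C (algebraMap F A b)) :
    y.natDegree = 1 ∧ y.coeff 1 ≠ 0 ∧
      σ (y.coeff 1) = -y.coeff 1 ∧ σ (y.coeff 0) = -y.coeff 0 ∧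
      (y.coeff 1) ^ 2 = algebraMap F A a ∧ (y.coeff 0) ^ 2 = algebraMap F A b ∧
      y.coeff 0 * y.coeff 1 = -(y.coeff 1 * y.coeff 0) := by
  have hinj : Function.Injective (algebraMap F A) := (algebraMap F A).injective
  have hsq : ∀ x : A, σ x = -x → x * x = 0 → x = 0 := by
    intro x hx h0
    apply haniso
    rw [hx, neg_mul, h0, neg_zero]
  have hrhs : ∀ k : ℕ, (C (algebraMap F A a) * X ^ 2 + C (algebraMap F A b)).coeff k
      = (if k = 2 then algebraMap F A a else 0) + (if k = 0 then algebraMap F A b else 0) := by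
    intro k
    simp [coeff_add, coeff_C_mul, coeff_X_pow, coeff_C, eq_comm]
  have hy2' : y * y = C (algebraMap F A a) * X ^ 2 + C (algebraMap F A b) := by
    rw [← sq]; exact hy2
  have hcoeff : ∀ k : ℕ, (y * y).coeff k
      = (if k = 2 then algebraMap F A a else 0) + (if k = 0 then algebraMap F A b else 0) := by
    intro k; rw [hy2', hrhs]
  have hyne : y ≠ 0 := by
    intro h
    have h0 := hcoeff 0
    rw [h, zero_mul, coeff_zero] at h0
    norm_num at h0
    exact hb (hinj (by rw [map_zero]; exact h0.symm))
  have hlead : y.coeff y.natDegree ≠ 0 := leadingCoeff_ne_zero.mpr hyne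
  have hlc : (y * y).coeff (y.natDegree + y.natDegree) = y.coeff y.natDegree * y.coeff y.natDegree :=
    coeff_mul_degree_add_degree y y
  have hdeg : y.natDegree = 1 := by
    rcases Nat.lt_or_ge y.natDegree 2 with h | h
    · rcases (by omega : y.natDegree = 0 ∨ y.natDegree = 1) with h0 | h1
      · exfalso
        have h2 : (y * y).coeff 2 = 0 := by
          rw [coeff_mul]
          apply Finset.sum_eq_zero
          intro p hp
          have hij := Finset.HasAntidiagonal.mem_antidiagonal.mp hp
          rcases Nat.eq_zero_or_pos p.1 with h1 | h1
          · rw [show y.coeff p.2 = 0 from coeff_eq_zero_of_natDegree_lt (by omega), mul_zero]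
          · rw [show y.coeff p.1 = 0 from coeff_eq_zero_of_natDegree_lt (by omega), zero_mul]
        have h3 := hcoeff 2
        rw [h2] at h3
        norm_num at h3
        exact ha (hinj (by rw [map_zero]; exact h3.symm))
      · exact h1
    · exfalso
      have hz := hcoeff (y.natDegree + y.natDegree)
      have h1 : y.natDegree + y.natDegree ≠ 2 := by omega
      have h2 : y.natDegree + y.natDegree ≠ 0 := by omega
      rw [hlc, if_neg h1, if_neg h2, add_zero] at hz
      exact hlead (hsq _ (hskew _) hz)
  refine ⟨hdeg, ?_, hskew 1, hskew 0, ?_, ?_, ?_⟩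
  · rw [← hdeg]; exact hlead
  · have h2 := hcoeff 2
    rw [hdeg] at hlc
    norm_num at hlc
    rw [hlc] at h2
    norm_num at h2
    rw [sq]
    exact h2
  · have h0 := hcoeff 0
    rw [mul_coeff_zero] at h0
    norm_num at h0
    rw [sq]
    exact h0
  · have h1 := hcoeff 1
    rw [coeff_mul, Finset.Nat.sum_antidiagonal_eq_sum_range_succ_mk] at h1
    simp [Finset.sum_range_succ] at h1
    exact eq_neg_of_add_eq_zero_left h1
end

section
/- Let F be a field of characteristic not 2, and let μ, a, b', a' ∈ F^× be such that the 3-fold Pfister form ⟪μ, a, b'⟫ is hyperbolic and the quadratic form ⟨μa, ab', -μab'⟩ represents -a'b'μ. Then the 5-dimensional quadratic form ⟨1, -μ, -a, μb', -a'b'μ⟩ is isotropic. -/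
set_option maxHeartbeats 1000000 in
/-- If the 3-fold Pfister form `⟪μ, a, b'⟫` is hyperbolic and
`⟨μa, ab', -μab'⟩` represents `-a'b'μ`, then the 5-dimensional form
`⟨1, -μ, -a, μb', -a'b'μ⟩` is isotropic. -/
theorem five_dim_subform_isotropic (F : Type*) [Field F] (hchar : (2 : F) ≠ 0)
    (μ a b' a' : F) (hμ : μ ≠ 0) (ha : a ≠ 0) (hb' : b' ≠ 0) (ha' : a' ≠ 0)
    (hhyp : QuadraticMap.Equivalent
      (QuadraticMap.weightedSumSquares F
        ![1, -μ, -a, μ * a, -b', μ * b', a * b', -(μ * a * b')])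
      (QuadraticMap.weightedSumSquares F ![1, -1, 1, -1, 1, -1, 1, -1]))
    (hrep : ∃ x y z : F,
      μ * a * x ^ 2 + a * b' * y ^ 2 - μ * a * b' * z ^ 2 = -(a' * b' * μ)) :
    ∃ v : Fin 5 → F, v ≠ 0 ∧
      v 0 ^ 2 - μ * v 1 ^ 2 - a * v 2 ^ 2 + μ * b' * v 3 ^ 2
        - a' * b' * μ * v 4 ^ 2 = 0 := by
  obtain ⟨x, y, z, hxyz⟩ := hrep
  obtain ⟨e⟩ := hhyp
  -- the linear embedding of the 5-dim space into the 8-dim space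
  set L : (Fin 5 → F) →ₗ[F] (Fin 8 → F) :=
    { toFun := fun v i =>
        if i = 0 then v 0 else if i = 1 then v 1 else if i = 2 then v 2 else
        if i = 3 then x * v 4 else if i = 4 then 0 else if i = 5 then v 3 else
        if i = 6 then y * v 4 else z * v 4
      map_add' := by
        intro u v; funext i
        simp only [Pi.add_apply]
        split_ifs <;> ring
      map_smul' := by
        intro c v; funext i
        simp only [Pi.smul_apply, smul_eq_mul, RingHom.id_apply]
        split_ifs <;> ring } with hLdef
  have habμ : a' * b' * μ ≠ 0 := mul_ne_zero (mul_ne_zero ha' hb') hμ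
  have hxyz0 : ¬ (x = 0 ∧ y = 0 ∧ z = 0) := by
    rintro ⟨rfl, rfl, rfl⟩
    exact habμ (by linear_combination hxyz)
  have hLinj : Function.Injective L := by
    rw [← LinearMap.ker_eq_bot]
    refine (Submodule.eq_bot_iff _).2 ?_
    intro v hv
    rw [LinearMap.mem_ker] at hv
    have h0 : v 0 = 0 := congrFun hv 0
    have h1 : v 1 = 0 := congrFun hv 1
    have h2 : v 2 = 0 := congrFun hv 2
    have h3 : x * v 4 = 0 := congrFun hv 3
    have h5 : v 3 = 0 := congrFun hv 5
    have h6 : y * v 4 = 0 := congrFun hv 6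
    have h7 : z * v 4 = 0 := congrFun hv 7
    have hv4 : v 4 = 0 := by
      by_contra hv4
      refine hxyz0 ⟨?_, ?_, ?_⟩
      · rcases mul_eq_zero.1 h3 with h | h
        · exact h
        · exact absurd h hv4
      · rcases mul_eq_zero.1 h6 with h | h
        · exact h
        · exact absurd h hv4
      · rcases mul_eq_zero.1 h7 with h | h
        · exact h
        · exact absurd h hv4
    funext i
    fin_cases i <;> simp [h0, h1, h2, h5, hv4]
  -- the composite embedding into the hyperbolic form
  set G : (Fin 5 → F) →ₗ[F] (Fin 8 → F) :=
    (e.toLinearEquiv : (Fin 8 → F) →ₗ[F] (Fin 8 → F)) ∘ₗ L with hG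
  have hGinj : Function.Injective G := e.toLinearEquiv.injective.comp hLinj
  set W : Submodule F (Fin 8 → F) := LinearMap.range G with hW
  -- a totally isotropic 4-dim subspace of the hyperbolic form
  set M : (Fin 4 → F) →ₗ[F] (Fin 8 → F) :=
    { toFun := fun u i =>
        if i = 0 then u 0 else if i = 1 then u 0 else if i = 2 then u 1 else
        if i = 3 then u 1 else if i = 4 then u 2 else if i = 5 then u 2 else
        if i = 6 then u 3 else u 3
      map_add' := by
        intro u v; funext i
        simp only [Pi.add_apply]
        split_ifs <;> ring
      map_smul' := by
        intro c v; funext i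
        simp only [Pi.smul_apply, smul_eq_mul, RingHom.id_apply]
        split_ifs <;> ring } with hMdef
  have hMinj : Function.Injective M := by
    intro u v h
    have h0 : u 0 = v 0 := congrFun h 0
    have h2 : u 1 = v 1 := congrFun h 2
    have h4 : u 2 = v 2 := congrFun h 4
    have h6 : u 3 = v 3 := congrFun h 6
    funext i
    fin_cases i
    · exact h0
    · exact h2
    · exact h4
    · exact h6
  set T : Submodule F (Fin 8 → F) := LinearMap.range M with hT
  have hdimW : Module.finrank F W = 5 := by
    rw [hW, LinearMap.finrank_range_of_inj hGinj]
    simp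
  have hdimT : Module.finrank F T = 4 := by
    rw [hT, LinearMap.finrank_range_of_inj hMinj]
    simp
  have hinf : 0 < Module.finrank F ↥(W ⊓ T) := by
    have h1 := Submodule.finrank_sup_add_finrank_inf_eq W T
    have h2 : Module.finrank F ↥(W ⊔ T) ≤ Module.finrank F (Fin 8 → F) :=
      Submodule.finrank_le _
    have h3 : Module.finrank F (Fin 8 → F) = 8 := by simp
    omega
  have : Nontrivial ↥(W ⊓ T) := Module.nontrivial_of_finrank_pos hinf
  obtain ⟨⟨w, hwWT⟩, hwne⟩ := exists_ne (0 : ↥(W ⊓ T))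
  have hw0 : w ≠ 0 := fun h => hwne (Subtype.ext h)
  obtain ⟨hwW, hwT⟩ := Submodule.mem_inf.1 hwWT
  obtain ⟨v, hv⟩ := hwW
  obtain ⟨u, hu⟩ := hwT
  refine ⟨v, ?_, ?_⟩
  · intro h; apply hw0; rw [← hv, h, map_zero]
  · -- the hyperbolic form vanishes on w
    have hh : QuadraticMap.weightedSumSquares F ![1, -1, 1, -1, 1, -1, 1, -1] w = 0 := by
      rw [← hu, QuadraticMap.weightedSumSquares_apply, Fin.sum_univ_eight]
      have m0 : M u 0 = u 0 := rfl
      have m1 : M u 1 = u 0 := rfl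
      have m2 : M u 2 = u 1 := rfl
      have m3 : M u 3 = u 1 := rfl
      have m4 : M u 4 = u 2 := rfl
      have m5 : M u 5 = u 2 := rfl
      have m6 : M u 6 = u 3 := rfl
      have m7 : M u 7 = u 3 := rfl
      have w0 : (![1, -1, 1, -1, 1, -1, 1, -1] : Fin 8 → ℤ) 0 = 1 := rfl
      have w1 : (![1, -1, 1, -1, 1, -1, 1, -1] : Fin 8 → ℤ) 1 = -1 := rfl
      have w2 : (![1, -1, 1, -1, 1, -1, 1, -1] : Fin 8 → ℤ) 2 = 1 := rfl
      have w3 : (![1, -1, 1, -1, 1, -1, 1, -1] : Fin 8 → ℤ) 3 = -1 := rfl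
      have w4 : (![1, -1, 1, -1, 1, -1, 1, -1] : Fin 8 → ℤ) 4 = 1 := rfl
      have w5 : (![1, -1, 1, -1, 1, -1, 1, -1] : Fin 8 → ℤ) 5 = -1 := rfl
      have w6 : (![1, -1, 1, -1, 1, -1, 1, -1] : Fin 8 → ℤ) 6 = 1 := rfl
      have w7 : (![1, -1, 1, -1, 1, -1, 1, -1] : Fin 8 → ℤ) 7 = -1 := rfl
      simp only [m0, m1, m2, m3, m4, m5, m6, m7, w0, w1, w2, w3, w4, w5, w6, w7,
        one_smul, neg_smul]
      ring
    have hq : QuadraticMap.weightedSumSquares F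
        ![1, -μ, -a, μ * a, -b', μ * b', a * b', -(μ * a * b')] (L v) = 0 := by
      rw [← e.map_app (L v)]
      show QuadraticMap.weightedSumSquares F ![1, -1, 1, -1, 1, -1, 1, -1] (G v) = 0
      rw [hv]; exact hh
    rw [QuadraticMap.weightedSumSquares_apply, Fin.sum_univ_eight] at hq
    have l0 : L v 0 = v 0 := rfl
    have l1 : L v 1 = v 1 := rfl
    have l2 : L v 2 = v 2 := rfl
    have l3 : L v 3 = x * v 4 := rfl
    have l4 : L v 4 = 0 := rfl
    have l5 : L v 5 = v 3 := rfl
    have l6 : L v 6 = y * v 4 := rfl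
    have l7 : L v 7 = z * v 4 := rfl
    have w0 : (![1, -μ, -a, μ * a, -b', μ * b', a * b', -(μ * a * b')] : Fin 8 → F) 0 = 1 := rfl
    have w1 : (![1, -μ, -a, μ * a, -b', μ * b', a * b', -(μ * a * b')] : Fin 8 → F) 1 = -μ := rfl
    have w2 : (![1, -μ, -a, μ * a, -b', μ * b', a * b', -(μ * a * b')] : Fin 8 → F) 2 = -a := rfl
    have w3 : (![1, -μ, -a, μ * a, -b', μ * b', a * b', -(μ * a * b')] : Fin 8 → F) 3 = μ * a := rfl
    have w4 : (![1, -μ, -a, μ * a, -b', μ * b', a * b', -(μ * a * b')] : Fin 8 → F) 4 = -b' := rfl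
    have w5 : (![1, -μ, -a, μ * a, -b', μ * b', a * b', -(μ * a * b')] : Fin 8 → F) 5 = μ * b' := rfl
    have w6 : (![1, -μ, -a, μ * a, -b', μ * b', a * b', -(μ * a * b')] : Fin 8 → F) 6 = a * b' := rfl
    have w7 : (![1, -μ, -a, μ * a, -b', μ * b', a * b', -(μ * a * b')] : Fin 8 → F) 7 = -(μ * a * b') := rfl
    simp only [l0, l1, l2, l3, l4, l5, l6, l7, w0, w1, w2, w3, w4, w5, w6, w7] at hq
    simp only [smul_eq_mul] at hq
    linear_combination hq - v 4 ^ 2 * hxyz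
end
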